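/- arXiv:1603.05182 — 2 statements merged into one kernel-verified Lean document; each statement's English description precedes it below -/
import Mathlib

section
/- The operator gauging map is invertible on symmetric operators: if O is a symmetric operator on H_m, then the compression of 𝒢[O] onto the all-zeros gauge state returns O up to the symmetry-group normalization, namely (1_m ⊗ ⟨f_0|) 𝒢[O] (1_m ⊗ |f_0⟩) = |S| · O, where |S| is the cardinality of the symmetry group S. -/
set_option linter.unusedSectionVars false

noncomputable section

namespace GaugingFractal

/-- The sign `(-1)^t` attached to a `ZMod 2` exponent. -/
def sgn (t : ZMod 2) : ℂ := (-1 : ℂ) ^ t.val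

lemma sgn_mul_self (t : ZMod 2) : sgn t * sgn t = 1 := by
  unfold sgn
  rw [← pow_add, ← two_mul, pow_mul]
  norm_num

lemma zmodfun_add_self {K : Type*} (k : K → ZMod 2) : k + k = 0 := by
  funext j
  exact CharTwo.add_self_eq_zero _

/-- Hilbert space of qubits labelled by a finite set `K`; the computational basis
vector `e_a` is indexed by a pattern `a : K → ZMod 2`. -/
abbrev HS (K : Type*) := EuclideanSpace ℂ (K → ZMod 2)

section Single
variable {K : Type*} [Fintype K] [DecidableEq K]

/-- Pauli X operator: `X(p) e_a = e_{a+p}`. -/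
def XOp (p : K → ZMod 2) : HS K →ₗ[ℂ] HS K where
  toFun ψ := WithLp.toLp 2 (fun a => ψ (a + p))
  map_add' _ _ := rfl
  map_smul' _ _ := rfl

/-- Pauli Z operator: `Z(p) e_a = (-1)^{Σ_i p i * a i} e_a`. -/
def ZOp (p : K → ZMod 2) : HS K →ₗ[ℂ] HS K where
  toFun ψ := WithLp.toLp 2 (fun a => sgn (∑ i, p i * a i) * ψ a)
  map_add' ψ φ := by
    ext a
    exact mul_add _ _ _
  map_smul' c ψ := by
    ext a
    simp only [RingHom.id_apply, PiLp.smul_apply, PiLp.toLp_apply, smul_eq_mul]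
    ring

end Single

section Pair

variable {I J : Type*} [Fintype I] [DecidableEq I] [Fintype J] [DecidableEq J]

/-- Hilbert space of the matter qubits (labelled by `I`) tensored with the gauge
qubits (labelled by `J`): the computational basis vector indexed by `(a, b)`
realizes the tensor product `e_a ⊗ f_b`. -/
abbrev HS2 (I J : Type*) := EuclideanSpace ℂ ((I → ZMod 2) × (J → ZMod 2))

/-- `X(p) ⊗ X_g(q)` on `H_m ⊗ H_g`. -/
def XXOp (p : I → ZMod 2) (q : J → ZMod 2) : HS2 I J →ₗ[ℂ] HS2 I J where
  toFun ψ := WithLp.toLp 2 (fun ab => ψ (ab.1 + p, ab.2 + q))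
  map_add' _ _ := rfl
  map_smul' _ _ := rfl

/-- `X(p) ⊗ Z_g(q)` on `H_m ⊗ H_g`. -/
def XZOp (p : I → ZMod 2) (q : J → ZMod 2) : HS2 I J →ₗ[ℂ] HS2 I J where
  toFun ψ := WithLp.toLp 2 (fun ab => sgn (∑ j, q j * ab.2 j) * ψ (ab.1 + p, ab.2))
  map_add' ψ φ := by
    ext ab
    exact mul_add _ _ _
  map_smul' c ψ := by
    ext ab
    simp only [RingHom.id_apply, PiLp.smul_apply, PiLp.toLp_apply, smul_eq_mul]
    ring

/-- `Z(p) ⊗ X_g(q)` on `H_m ⊗ H_g`. -/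
def ZXOp (p : I → ZMod 2) (q : J → ZMod 2) : HS2 I J →ₗ[ℂ] HS2 I J where
  toFun ψ := WithLp.toLp 2 (fun ab => sgn (∑ i, p i * ab.1 i) * ψ (ab.1, ab.2 + q))
  map_add' ψ φ := by
    ext ab
    exact mul_add _ _ _
  map_smul' c ψ := by
    ext ab
    simp only [RingHom.id_apply, PiLp.smul_apply, PiLp.toLp_apply, smul_eq_mul]
    ring

/-- The flux operator `1 ⊗ Z_g(k)` on `H_m ⊗ H_g`. -/
def IZOp (k : J → ZMod 2) : HS2 I J →ₗ[ℂ] HS2 I J := XZOp 0 k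

variable (A : J → Finset I)

/-- The boundary map `∂ : (I → ZMod 2) → (J → ZMod 2)`, `(∂p)(j) = Σ_{i ∈ A j} p(i)`. -/
def bnd (p : I → ZMod 2) : J → ZMod 2 := fun j => ∑ i ∈ A j, p i

/-- The coboundary map `δ : (J → ZMod 2) → (I → ZMod 2)`, `(δk)(i) = Σ_{j : i ∈ A j} k(j)`. -/
def cobnd (k : J → ZMod 2) : I → ZMod 2 :=
  fun i => ∑ j ∈ Finset.univ.filter (fun j => i ∈ A j), k j

/-- The indicator pattern `χ_i` of a matter qubit `i`. -/
def chi (i : I) : I → ZMod 2 := Pi.single i 1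

/-- The indicator pattern `κ_j` of a gauge qubit `j`. -/
def kap (j : J) : J → ZMod 2 := Pi.single j 1

/-- The local gauge constraint `C_i = X(χ_i) ⊗ X_g(∂χ_i)`. -/
def C (i : I) : HS2 I J →ₗ[ℂ] HS2 I J := XXOp (chi i) (bnd A (chi i))

lemma XXOp_mul (p p' : I → ZMod 2) (q q' : J → ZMod 2) :
    (XXOp p q : Module.End ℂ (HS2 I J)) * XXOp p' q' = XXOp (p + p') (q + q') := by
  apply LinearMap.ext
  intro ψ
  ext ab
  show ψ (ab.1 + p + p', ab.2 + q + q') = ψ (ab.1 + (p + p'), ab.2 + (q + q'))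
  rw [add_assoc, add_assoc]

lemma C_commute (i i' : I) : Commute (C A i) (C A i') := by
  show C A i * C A i' = C A i' * C A i
  unfold C
  rw [XXOp_mul, XXOp_mul, add_comm (chi i) (chi i'),
    add_comm (bnd A (chi i)) (bnd A (chi i'))]

/-- The product of gauge constraints `C^s = Π_{i : s i = 1} C_i`. -/
def Cprod (s : I → ZMod 2) : Module.End ℂ (HS2 I J) :=
  (Finset.univ.filter fun i => s i = 1).noncommProd (fun i => C A i)
    (fun i _ j _ _ => C_commute A i j)

lemma Chalf_commute (i i' : I) :
    Commute ((2 : ℂ)⁻¹ • (1 + C A i)) ((2 : ℂ)⁻¹ • (1 + C A i')) := by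
  have h : Commute (1 + C A i) (1 + C A i') :=
    (Commute.one_left _).add_left ((Commute.one_right _).add_right (C_commute A i i'))
  exact (h.smul_left _).smul_right _

/-- The projector `P = Π_{i ∈ I} (1 + C_i)/2` onto the gauge invariant subspace. -/
def Pproj : Module.End ℂ (HS2 I J) :=
  Finset.univ.noncommProd (fun i => (2 : ℂ)⁻¹ • (1 + C A i))
    (fun i _ j _ _ => Chalf_commute A i j)

/-- `ψ ↦ ψ ⊗ f_0`, the inclusion `1_m ⊗ |f_0⟩ : H_m → H_m ⊗ H_g` determined by the
all-zeros gauge basis vector `f_0`. -/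
def incl : HS I →ₗ[ℂ] HS2 I J where
  toFun ψ := WithLp.toLp 2 (fun ab => if ab.2 = 0 then ψ ab.1 else 0)
  map_add' ψ φ := by
    ext ab
    by_cases h : ab.2 = 0 <;> simp [h]
  map_smul' c ψ := by
    ext ab
    by_cases h : ab.2 = 0 <;> simp [h]

/-- The compression `1_m ⊗ ⟨f_0| : H_m ⊗ H_g → H_m`. -/
def res0 : HS2 I J →ₗ[ℂ] HS I where
  toFun ψ := WithLp.toLp 2 (fun a => ψ (a, 0))
  map_add' _ _ := rfl
  map_smul' _ _ := rfl

/-- The state gauging map `G ψ = P (ψ ⊗ f_0)`. -/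
def Gmap : HS I →ₗ[ℂ] HS2 I J := Pproj A ∘ₗ incl

/-- The operator gauging map `𝒢[O] = Σ_{s : I → ZMod 2} C^s (O ⊗ |f_0⟩⟨f_0|) C^s`,
where `O ⊗ |f_0⟩⟨f_0| = incl ∘ O ∘ res0`. -/
def gaugeOp (O : Module.End ℂ (HS I)) : Module.End ℂ (HS2 I J) :=
  ∑ s : I → ZMod 2, Cprod A s * (incl ∘ₗ O ∘ₗ res0) * Cprod A s

/-- The joint fixed subspace `{v | C_i v = v for all i}` of the gauge constraints. -/
def fixedSub : Submodule ℂ (HS2 I J) where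
  carrier := {v | ∀ i, C A i v = v}
  add_mem' := by
    intro x y hx hy i
    rw [map_add, hx i, hy i]
  zero_mem' := by
    intro i
    simp
  smul_mem' := by
    intro c x hx i
    rw [map_smul, hx i]

/-- The symmetric subspace `{ψ | X(s) ψ = ψ for all s with ∂s = 0}` of the matter space. -/
def symmSub : Submodule ℂ (HS I) where
  carrier := {ψ | ∀ s, bnd A s = 0 → XOp s ψ = ψ}
  add_mem' := by
    intro x y hx hy s hs
    rw [map_add, hx s hs, hy s hs]
  zero_mem' := by
    intro s hs
    simp
  smul_mem' := by
    intro c x hx s hs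
    rw [map_smul, hx s hs]

/-- The cluster stabilizer `K_i = X(χ_i) ⊗ Z_g(∂χ_i)`. -/
def Kst (i : I) : Module.End ℂ (HS2 I J) := XZOp (chi i) (bnd A (chi i))

/-- The cluster stabilizer `L_j = Z(δκ_j) ⊗ X_g(κ_j)`. -/
def Lst (j : J) : Module.End ℂ (HS2 I J) := ZXOp (cobnd A (kap j)) (kap j)

/-- The disentangling circuit of controlled-X gates from each matter qubit to its
adjacent gauge qubits: `V (e_a ⊗ f_b) = e_a ⊗ f_{b + ∂a}`. -/
def Vequiv : HS2 I J ≃ₗ[ℂ] HS2 I J where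
  toFun ψ := WithLp.toLp 2 (fun ab => ψ (ab.1, ab.2 + bnd A ab.1))
  invFun ψ := WithLp.toLp 2 (fun ab => ψ (ab.1, ab.2 + bnd A ab.1))
  map_add' _ _ := rfl
  map_smul' _ _ := rfl
  left_inv ψ := by
    ext ab
    show ψ (ab.1, ab.2 + bnd A ab.1 + bnd A ab.1) = ψ ab
    rw [add_assoc, zmodfun_add_self, add_zero]
  right_inv ψ := by
    ext ab
    show ψ (ab.1, ab.2 + bnd A ab.1 + bnd A ab.1) = ψ ab
    rw [add_assoc, zmodfun_add_self, add_zero]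

/-- The circuit of controlled-Z gates along the edges of the bipartite graph:
`U (e_a ⊗ f_b) = (-1)^{Σ_j (∂a)(j)·b(j)} e_a ⊗ f_b`. -/
def Uequiv : HS2 I J ≃ₗ[ℂ] HS2 I J where
  toFun ψ := WithLp.toLp 2 (fun ab => sgn (∑ j, bnd A ab.1 j * ab.2 j) * ψ ab)
  invFun ψ := WithLp.toLp 2 (fun ab => sgn (∑ j, bnd A ab.1 j * ab.2 j) * ψ ab)
  map_add' ψ φ := by
    ext ab
    exact mul_add _ _ _
  map_smul' c ψ := by
    ext ab
    simp only [RingHom.id_apply, PiLp.smul_apply, PiLp.toLp_apply, smul_eq_mul]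
    ring
  left_inv ψ := by
    ext ab
    show sgn _ * (sgn _ * ψ ab) = ψ ab
    rw [← mul_assoc, sgn_mul_self, one_mul]
  right_inv ψ := by
    ext ab
    show sgn _ * (sgn _ * ψ ab) = ψ ab
    rw [← mul_assoc, sgn_mul_self, one_mul]

/-! Every `C^s` is the Pauli string `X(s) ⊗ X_g(∂s)`, and `⟨f_0| X_g(q) |f_0⟩` vanishes unless
`q = 0`. Compressing `𝒢[O]` onto `f_0` therefore leaves the twirl `Σ_{s ∈ S} X(s) O X(s)`, each of
whose terms equals `O` when `O` commutes with the symmetry. -/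

section PauliX

variable {K : Type*} [Fintype K] [DecidableEq K]

lemma XOp_add (p q : K → ZMod 2) :
    (XOp (p + q) : Module.End ℂ (HS K)) = XOp p * XOp q := by
  ext ψ a
  exact congrArg ψ (add_assoc a p q).symm

lemma XOp_zero : (XOp 0 : Module.End ℂ (HS K)) = 1 := by
  ext ψ a
  exact congrArg ψ (add_zero a)

lemma XOp_mul_self (p : K → ZMod 2) : (XOp p : Module.End ℂ (HS K)) * XOp p = 1 := by
  rw [← XOp_add, zmodfun_add_self, XOp_zero]

end PauliX

lemma XXOp_zero : (XXOp 0 0 : Module.End ℂ (HS2 I J)) = 1 := by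
  ext ψ ab
  show ψ (ab.1 + 0, ab.2 + 0) = ψ ab
  rw [add_zero, add_zero]

lemma bnd_zero : bnd A (0 : I → ZMod 2) = 0 := by
  funext j
  simp [bnd]

lemma bnd_add (p q : I → ZMod 2) : bnd A (p + q) = bnd A p + bnd A q := by
  funext j
  simp [bnd, Finset.sum_add_distrib]

lemma noncommProd_C (T : Finset I) :
    T.noncommProd (fun i => (C A i : Module.End ℂ (HS2 I J))) (fun i _ j _ _ => C_commute A i j)
      = XXOp (∑ i ∈ T, chi i) (bnd A (∑ i ∈ T, chi i)) := by
  induction T using Finset.induction_on with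
  | empty =>
    rw [Finset.sum_empty, bnd_zero, XXOp_zero]
    exact Finset.noncommProd_empty _ _
  | insert i T hi ih =>
    refine (Finset.noncommProd_insert_of_notMem _ _ _ _ hi).trans ?_
    rw [ih, Finset.sum_insert hi, bnd_add, C, XXOp_mul]

lemma sum_chi_filter_eq_one (s : I → ZMod 2) : ∑ i with s i = 1, chi i = s := by
  conv_rhs => rw [← Finset.univ_sum_single s]
  rw [Finset.sum_filter]
  refine Finset.sum_congr rfl fun i _ => ?_
  obtain h | h : s i = 0 ∨ s i = 1 := by generalize s i = x; revert x; decide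
  · simp [h]
  · simp [h, chi]

lemma Cprod_eq_XXOp (s : I → ZMod 2) : Cprod A s = XXOp s (bnd A s) := by
  rw [Cprod, noncommProd_C, sum_chi_filter_eq_one]

lemma res0_comp_XXOp_comp_incl (p : I → ZMod 2) (q : J → ZMod 2) :
    res0 ∘ₗ XXOp p q ∘ₗ incl = if q = 0 then (XOp p : Module.End ℂ (HS I)) else 0 := by
  ext ψ a
  show (if (0 : J → ZMod 2) + q = 0 then ψ (a + p) else 0) = _
  rw [zero_add]
  split_ifs <;> rfl

lemma res0_comp_gaugeOp_comp_incl (O : Module.End ℂ (HS I)) :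
    res0 ∘ₗ gaugeOp A O ∘ₗ incl = ∑ s with bnd A s = 0, XOp s * O * XOp s := by
  have hterm (s : I → ZMod 2) :
      res0 ∘ₗ (Cprod A s * (incl ∘ₗ O ∘ₗ res0) * Cprod A s) ∘ₗ incl
        = (res0 ∘ₗ Cprod A s ∘ₗ incl) * O * (res0 ∘ₗ Cprod A s ∘ₗ incl) := rfl
  calc res0 ∘ₗ gaugeOp A O ∘ₗ incl
      = ∑ s, res0 ∘ₗ (Cprod A s * (incl ∘ₗ O ∘ₗ res0) * Cprod A s) ∘ₗ incl := by
        ext ψ : 1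
        simp [gaugeOp, map_sum]
    _ = ∑ s, if bnd A s = 0 then XOp s * O * XOp s else 0 := by
        refine Finset.sum_congr rfl fun s _ => ?_
        rw [hterm, Cprod_eq_XXOp, res0_comp_XXOp_comp_incl]
        split_ifs <;> simp
    _ = _ := (Finset.sum_filter _ _).symm

/-- For a symmetric operator `O`, compression of the gauged operator
`𝒢[O]` onto the all-zeros gauge state recovers `O` up to the symmetry-group normalization:
`(1 ⊗ ⟨f_0|) 𝒢[O] (1 ⊗ |f_0⟩) = |S| · O`. -/
theorem gaugeOp_compression (A : J → Finset I) (O : Module.End ℂ (HS I))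
    (hO : ∀ s : I → ZMod 2, bnd A s = 0 → O * XOp s = XOp s * O) :
    res0 ∘ₗ gaugeOp A O ∘ₗ incl
      = (Nat.card {s : I → ZMod 2 // bnd A s = 0} : ℂ) • O := by
  have hconj (s : I → ZMod 2) (hs : bnd A s = 0) : XOp s * O * XOp s = O := by
    rw [mul_assoc, hO s hs, ← mul_assoc, XOp_mul_self, one_mul]
  rw [res0_comp_gaugeOp_comp_incl,
    Finset.sum_congr rfl fun s hs => hconj s (Finset.mem_filter.1 hs).2, Finset.sum_const,
    Nat.card_eq_fintype_card, Fintype.card_subtype, Nat.cast_smul_eq_nsmul]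

end Pair

end GaugingFractal
end
end

section
/- Ground space of the zero-coupling gauge theory: let 𝒦 be a set of flux patterns k : J → ZMod 2, each satisfying δk = 0, and assume the exactness condition that every x : J → ZMod 2 with Σ_{j∈J} k(j)·x(j) = 0 for all k ∈ 𝒦 is of the form x = ∂m for some m : I → ZMod 2. Then the joint +1 eigenspace {v ∈ H_m ⊗ H_g : C_i v = v for all i ∈ I, and (1 ⊗ Z_g(k)) v = v for all k ∈ 𝒦} equals the range of the gauging map, {G ψ : ψ ∈ H_m}. -/
/-!
The gauge constraints generate the group of gauge transformations
`g_s : e_a ⊗ f_b ↦ e_{a+s} ⊗ f_{b+∂s}`, `s : I → ZMod 2`, and expanding the product `P` in the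
commutative group algebra of `I → ZMod 2` shows that `P` is the average over this group. Hence
`(Gψ)(a, b) = 2^{-|I|} Σ_{∂s = b} ψ(a + s)`: the state `Gψ` is gauge invariant and supported on
the gauge sectors `b ∈ range ∂`, where a flat flux operator acts trivially because
`Σ_j k_j (∂s)_j = Σ_i (δk)_i s_i = 0`. Conversely, a joint fixed vector is gauge invariant, and
by exactness every sector `b ∉ range ∂` is detected by some `k ∈ 𝒦` with `Σ_j k_j b_j = 1`, on
which the vector must vanish; such a vector is the gauging of its `b = 0` sector, rescaled by
`2^{|I|} / #ker ∂`.
-/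

set_option linter.unusedSectionVars false

noncomputable section

namespace GaugingFractal

section Pair

variable {I J : Type*} [Fintype I] [DecidableEq I] [Fintype J] [DecidableEq J]

variable (A : J → Finset I)

lemma zmodfun_add_eq_zero_iff {K : Type*} (x y : K → ZMod 2) : x + y = 0 ↔ x = y := by
  rw [add_eq_zero_iff_eq_neg, neg_eq_of_add_eq_zero_left (zmodfun_add_self y)]

lemma zmod2_eq_zero_or_eq_one (t : ZMod 2) : t = 0 ∨ t = 1 := by decide +revert

lemma sgn_zero : sgn 0 = 1 := pow_zero _

lemma sgn_one : sgn 1 = -1 := pow_one _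

def bndHom : (I → ZMod 2) →+ (J → ZMod 2) where
  toFun := bnd A
  map_zero' := by
    funext j
    simp [bnd]
  map_add' p q := by
    funext j
    simp [bnd, Finset.sum_add_distrib]

lemma sum_mul_bnd (k : J → ZMod 2) (s : I → ZMod 2) :
    ∑ j, k j * bnd A s j = ∑ i, cobnd A k i * s i := by
  simp only [bnd, cobnd, Finset.mul_sum, Finset.sum_mul, Finset.sum_filter]
  rw [Finset.sum_comm' (t' := Finset.univ) (s' := fun i => Finset.univ.filter (i ∈ A ·))]
  · simp [Finset.sum_filter]
  · simp

def gaugeTransform : Multiplicative (I → ZMod 2) →* Module.End ℂ (HS2 I J) where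
  toFun s := XXOp s.toAdd (bnd A s.toAdd)
  map_one' := by
    apply LinearMap.ext
    intro v
    ext ab
    show v (ab.1 + 0, ab.2 + bndHom A 0) = v ab
    rw [map_zero, add_zero, add_zero]
  map_mul' s t := by
    rw [XXOp_mul]
    exact congrArg _ (map_add (bndHom A) s.toAdd t.toAdd)

lemma gaugeTransform_apply (s : I → ZMod 2) (v : HS2 I J) (a : I → ZMod 2) (b : J → ZMod 2) :
    gaugeTransform A (.ofAdd s) v (a, b) = v (a + s, b + bnd A s) := rfl

lemma gaugeTransform_chi (i : I) : gaugeTransform A (.ofAdd (chi i)) = C A i := rfl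

lemma gaugeTransform_apply_eq_self_of_forall_C {v : HS2 I J} (hC : ∀ i, C A i v = v)
    (s : I → ZMod 2) : gaugeTransform A (.ofAdd s) v = v := by
  induction s using Pi.single_induction with
  | zero => rw [ofAdd_zero, map_one, Module.End.one_apply]
  | add s t hs ht => rw [ofAdd_add, map_mul, Module.End.mul_apply, ht, hs]
  | single i x =>
    obtain rfl | rfl := zmod2_eq_zero_or_eq_one x
    · rw [Pi.single_zero, ofAdd_zero, map_one, Module.End.one_apply]
    · exact hC i

lemma prod_one_add_single_chi :
    ∏ i, (1 + AddMonoidAlgebra.single (chi i) (1 : ℂ)) = ∑ s : I → ZMod 2, .single s 1 := by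
  have hsum (i : I) : 1 + AddMonoidAlgebra.single (chi i) (1 : ℂ)
      = ∑ x : ZMod 2, .single (Pi.single i x) 1 := by
    rw [show (Finset.univ : Finset (ZMod 2)) = {0, 1} from rfl, Finset.sum_pair zero_ne_one]
    simp [chi, AddMonoidAlgebra.one_def]
  simp only [hsum, Finset.prod_univ_sum, Fintype.piFinset_univ, AddMonoidAlgebra.prod_single,
    Finset.univ_sum_single, Finset.prod_const_one]

lemma Pproj_eq_sum :
    Pproj A = (2⁻¹ : ℂ) ^ Fintype.card I • ∑ s : I → ZMod 2, gaugeTransform A (.ofAdd s) := by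
  let φ := AddMonoidAlgebra.lift ℂ (Module.End ℂ (HS2 I J)) (I → ZMod 2) (gaugeTransform A)
  have hP := Finset.map_noncommProd Finset.univ (fun i => (2⁻¹ : ℂ) • (1 + .single (chi i) 1))
    (fun _ _ _ _ _ => Commute.all _ _) φ
  rw [Finset.noncommProd_eq_prod, ← Finset.smul_prod, prod_one_add_single_chi] at hP
  simp only [map_smul, map_add, map_one, map_sum, φ, AddMonoidAlgebra.lift_single, one_smul,
    gaugeTransform_chi] at hP
  rw [Pproj, ← hP, Finset.card_univ]

lemma C_mul_Pproj (i : I) : C A i * Pproj A = Pproj A := by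
  rw [Pproj_eq_sum, mul_smul_comm, Finset.mul_sum, ← gaugeTransform_chi]
  simp_rw [← map_mul, ← ofAdd_add]
  exact congrArg _ (Fintype.sum_equiv (Equiv.addLeft (chi i)) _ _ fun _ => rfl)

lemma Gmap_apply (ψ : HS I) (a : I → ZMod 2) (b : J → ZMod 2) :
    Gmap A ψ (a, b) = (2⁻¹ : ℂ) ^ Fintype.card I * ∑ s with bnd A s = b, ψ (a + s) := by
  have hterm (s : I → ZMod 2) : gaugeTransform A (.ofAdd s) (incl ψ) (a, b)
      = if bnd A s = b then ψ (a + s) else 0 := by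
    rw [gaugeTransform_apply]
    exact if_congr (by rw [zmodfun_add_eq_zero_iff, eq_comm]) rfl rfl
  show Pproj A (incl ψ) (a, b) = _
  rw [Pproj_eq_sum, Finset.sum_filter]
  simp [hterm]

lemma IZOp_eq_self_iff (k : J → ZMod 2) (v : HS2 I J) :
    IZOp k v = v ↔ ∀ a b, ∑ j, k j * b j = 1 → v (a, b) = 0 := by
  have happly (a : I → ZMod 2) (b : J → ZMod 2) :
      IZOp k v (a, b) = sgn (∑ j, k j * b j) * v (a, b) := by
    show sgn _ * v (a + 0, b) = _
    rw [add_zero]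
  constructor
  · intro h a b hkb
    have hv := congrArg (· (a, b)) h
    simp only [happly, hkb, sgn_one] at hv
    linear_combination -hv / 2
  · intro h
    ext ⟨a, b⟩
    rw [happly]
    obtain hkb | hkb := zmod2_eq_zero_or_eq_one (∑ j, k j * b j)
    · rw [hkb, sgn_zero, one_mul]
    · rw [h a b hkb, mul_zero]

lemma C_apply_Gmap (i : I) (ψ : HS I) : C A i (Gmap A ψ) = Gmap A ψ := by
  rw [Gmap, LinearMap.comp_apply, ← Module.End.mul_apply, C_mul_Pproj]

lemma IZOp_apply_Gmap {k : J → ZMod 2} (hk : cobnd A k = 0) (ψ : HS I) :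
    IZOp k (Gmap A ψ) = Gmap A ψ := by
  refine (IZOp_eq_self_iff k _).2 fun a b hkb => ?_
  rw [Gmap_apply, Finset.sum_eq_zero, mul_zero]
  intro s hs
  rw [← (Finset.mem_filter.1 hs).2, sum_mul_bnd, hk] at hkb
  simp at hkb

open Finset in
/-- Each sector `b = ∂m` receives the same number `#ker ∂` of contributions from the `b = 0`
sector. -/
lemma Gmap_smul_res0_eq_self {v : HS2 I J} (hC : ∀ i, C A i v = v)
    (hsupp : ∀ a b, b ∉ Set.range (bnd A) → v (a, b) = 0) :
    Gmap A (((2 : ℂ) ^ Fintype.card I / #{s | bnd A s = 0}) • res0 v) = v := by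
  set c := (2 : ℂ) ^ Fintype.card I / #{s | bnd A s = 0}
  ext ⟨a, b⟩
  rw [Gmap_apply]
  by_cases hb : b ∈ Set.range (bnd A)
  · obtain ⟨m, rfl⟩ := hb
    have hterm : ∀ s ∈ ({s | bnd A s = bnd A m} : Finset _),
        (c • res0 v) (a + s) = c * v (a, bnd A m) := by
      intro s hs
      have hv := congrArg (· (a, bnd A m)) (gaugeTransform_apply_eq_self_of_forall_C A hC s)
      simp only [gaugeTransform_apply, (Finset.mem_filter.1 hs).2, zmodfun_add_self] at hv
      rw [← hv]
      rfl
    have hcard : #{s | bnd A s = bnd A m} = #{s | bnd A s = 0} :=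
      AddMonoidHom.card_fiber_eq_of_mem_range (bndHom A) ⟨m, rfl⟩ ⟨0, map_zero _⟩
    have hN : (#{s | bnd A s = 0} : ℂ) ≠ 0 := by
      rw [Nat.cast_ne_zero, Finset.card_ne_zero]
      exact ⟨0, Finset.mem_filter.2 ⟨Finset.mem_univ _, map_zero (bndHom A)⟩⟩
    rw [Finset.sum_congr rfl hterm, Finset.sum_const, hcard, nsmul_eq_mul]
    simp only [c]
    field_simp
    rw [← mul_pow]
    norm_num
  · rw [hsupp a b hb, Finset.sum_eq_zero, mul_zero]
    intro s hs
    exact absurd ⟨s, (Finset.mem_filter.1 hs).2⟩ hb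

/-- Ground space of the zero-coupling gauge theory: given flux patterns
`𝒦`, all flat (`δk = 0`), such that every `x` orthogonal to all of `𝒦` is a boundary
`x = ∂m`, the joint fixed subspace of the gauge constraints and the flux operators equals
the range of the gauging map `G`. -/
theorem ground_space_eq_range (A : J → Finset I) (K : Set (J → ZMod 2))
    (hflat : ∀ k ∈ K, cobnd A k = 0)
    (hexact : ∀ x : J → ZMod 2,
      (∀ k ∈ K, ∑ j, k j * x j = (0 : ZMod 2)) → ∃ m : I → ZMod 2, x = bnd A m) :
    {v : HS2 I J | (∀ i : I, C A i v = v) ∧ ∀ k ∈ K, IZOp k v = v}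
      = Set.range (Gmap A) := by
  ext v
  constructor
  · rintro ⟨hC, hK⟩
    have hsupp : ∀ a b, b ∉ Set.range (bnd A) → v (a, b) = 0 := by
      intro a b hb
      obtain ⟨k, hkK, hkb⟩ : ∃ k ∈ K, ∑ j, k j * b j ≠ 0 := by
        by_contra! h
        obtain ⟨m, rfl⟩ := hexact b h
        exact hb ⟨m, rfl⟩
      exact (IZOp_eq_self_iff k v).1 (hK k hkK) a b ((zmod2_eq_zero_or_eq_one _).resolve_left hkb)
    exact ⟨_, Gmap_smul_res0_eq_self A hC hsupp⟩
  · rintro ⟨ψ, rfl⟩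
    exact ⟨fun i => C_apply_Gmap A i ψ, fun k hk => IZOp_apply_Gmap A (hflat k hk) ψ⟩

end Pair

end GaugingFractal
end
end
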